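/- arXiv:2208.11049 — 3 statements merged into one kernel-verified Lean document; each statement's English description precedes it below -/
import Mathlib

section
/- Let G be a group, p a prime and m ≥ 1. Let ρ_m : G → GSp₄(ℤ/p^mℤ) and ψ : G → (ℤ/p^{m+1}ℤ)ˣ be group homomorphisms, and let ϱ : G → GSp₄(ℤ/p^{m+1}ℤ) be a function (not assumed multiplicative) whose reduction mod p^m equals ρ_m and with ν(ϱ(g)) = ψ(g) for all g ∈ G. Then for all g, h ∈ G the element ϱ(g)ϱ(h)ϱ(gh)⁻¹ equals 1 + p^m·c̃(g,h) for a unique c(g,h) ∈ sp₄(𝔽_p) (c̃(g,h) denoting any lift of c(g,h)), and the function c : G × G → sp₄(𝔽_p) satisfies the 2-cocycle identity ρ̄(g)·c(h,k)·ρ̄(g)⁻¹ − c(gh,k) + c(g,hk) − c(g,h) = 0 for all g, h, k ∈ G, where ρ̄ : G → GSp₄(𝔽_p) is the mod-p reduction of ρ_m. -/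
/-!
Put `ε = p ^ m` in `ℤ/p^{m+1}`. Then `ε² = 0`, and `ε • r` only depends on `r` mod `p`, so
`C ↦ ε • C̃` identifies `M₄(𝔽_p)` with the kernel of reduction mod `p^m`. As `ρ_m` is
multiplicative, `E(g,h) = ϱ(g)ϱ(h)ϱ(gh)⁻¹` reduces to `1` mod `p^m`, hence is `1 + ε • c̃(g,h)`;
as `ψ` is multiplicative, `E(g,h)` preserves `J`, which to first order in `ε` says
`c(g,h) ∈ sp₄(𝔽_p)`. The cocycle identity is the first-order part of the identity
`E(g,h) E(gh,k) = ϱ(g) E(h,k) ϱ(g)⁻¹ E(g,hk)`, valid for any map into invertible matrices.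
-/

open Matrix

/-- The 4×4 matrix `J` given in 2×2 blocks by `[[0, I₂], [−I₂, 0]]`. -/
def Jmat (R : Type*) [CommRing R] : Matrix (Fin 4) (Fin 4) R :=
  !![0, 0, 1, 0; 0, 0, 0, 1; -1, 0, 0, 0; 0, -1, 0, 0]

section Similitude

variable {n R S : Type*} [Fintype n] [DecidableEq n] [CommRing R] [CommRing S]

theorem Matrix.map_nonsing_inv (f : R →+* S) {A : Matrix n n R} (hA : IsUnit A.det) :
    A⁻¹.map f = (A.map f)⁻¹ := by
  refine (inv_eq_right_inv ?_).symm
  rw [← RingHom.mapMatrix_apply, ← RingHom.mapMatrix_apply, ← map_mul, mul_nonsing_inv _ hA,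
    map_one]

theorem one_add_smul_mul_one_add_smul {ε : R} (hε : ε * ε = 0) (A B : Matrix n n R) :
    (1 + ε • A) * (1 + ε • B) = 1 + ε • (A + B) := by
  simp only [add_mul, mul_add, one_mul, mul_one, smul_mul_smul_comm, hε, zero_smul, smul_add]
  abel

theorem mul_one_add_smul_mul_nonsing_inv {P : Matrix n n R} (hP : IsUnit P.det) (ε : R)
    (A : Matrix n n R) : P * (1 + ε • A) * P⁻¹ = 1 + ε • (P * A * P⁻¹) := by
  rw [mul_add, add_mul, mul_one, mul_nonsing_inv _ hP, mul_smul_comm, smul_mul_assoc]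

theorem smul_transpose_mul_add_mul_eq_zero {ε : R} (hε : ε * ε = 0) {J D : Matrix n n R}
    (h : (1 + ε • D)ᵀ * J * (1 + ε • D) = J) : ε • (Dᵀ * J + J * D) = 0 := by
  have hexp : (1 + ε • D)ᵀ * J * (1 + ε • D) = J + ε • (Dᵀ * J + J * D) := by
    simp only [transpose_add, transpose_one, transpose_smul, add_mul, mul_add, one_mul, mul_one,
      smul_mul_assoc, mul_smul_comm, smul_smul, hε, zero_smul, smul_add]
    abel
  rwa [hexp, add_eq_left] at h

variable {J : Matrix n n R}

theorem isUnit_det_of_transpose_mul_mul_eq_smul (hJ : IsUnit J.det) {A : Matrix n n R} {a : R}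
    (ha : IsUnit a) (h : Aᵀ * J * A = a • J) : IsUnit A.det := by
  have hdet := congrArg det h
  rw [det_mul, det_mul, det_transpose, det_smul, mul_right_comm] at hdet
  rw [hJ.mul_left_inj] at hdet
  exact isUnit_of_mul_isUnit_left (hdet ▸ ha.pow _)

theorem transpose_mul_mul_eq_smul_mul {A B : Matrix n n R} {a b : R}
    (hA : Aᵀ * J * A = a • J) (hB : Bᵀ * J * B = b • J) :
    (A * B)ᵀ * J * (A * B) = (a * b) • J := by
  rw [transpose_mul, show Bᵀ * Aᵀ * J * (A * B) = Bᵀ * (Aᵀ * J * A) * B by noncomm_ring, hA,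
    mul_smul_comm, smul_mul_assoc, hB, smul_smul, mul_comm]

theorem transpose_mul_nonsing_inv_mul_mul {X C : Matrix n n R} (hC : IsUnit C.det)
    (h : Xᵀ * J * X = Cᵀ * J * C) : (X * C⁻¹)ᵀ * J * (X * C⁻¹) = J := by
  rw [transpose_mul, show C⁻¹ᵀ * Xᵀ * J * (X * C⁻¹) = C⁻¹ᵀ * (Xᵀ * J * X) * C⁻¹ by noncomm_ring,
    h, show C⁻¹ᵀ * (Cᵀ * J * C) * C⁻¹ = (C * C⁻¹)ᵀ * J * (C * C⁻¹) by
      rw [transpose_mul]; noncomm_ring, mul_nonsing_inv _ hC, transpose_one, one_mul, mul_one]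

end Similitude

section Obstruction

variable {n R S G : Type*} [Fintype n] [DecidableEq n] [CommRing R] [CommRing S] [Group G]

noncomputable def obstruction (ϱ : G → Matrix n n R) (g h : G) : Matrix n n R :=
  ϱ g * ϱ h * (ϱ (g * h))⁻¹

variable {ϱ : G → Matrix n n R}

theorem obstruction_mul_obstruction (hϱ : ∀ g, IsUnit (ϱ g).det) (g h k : G) :
    obstruction ϱ g h * obstruction ϱ (g * h) k
      = ϱ g * obstruction ϱ h k * (ϱ g)⁻¹ * obstruction ϱ g (h * k) := by
  let u : G → (Matrix n n R)ˣ := fun g => ((isUnit_iff_isUnit_det _).2 (hϱ g)).unit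
  have hu : ∀ g, ϱ g = u g := fun g => rfl
  simp only [obstruction, hu, ← coe_units_inv, ← Units.val_mul]
  congr 1
  rw [mul_assoc g h k]
  group

theorem map_obstruction (f : R →+* S) (hϱ : ∀ g, IsUnit (ϱ g).det) (g h : G) :
    (obstruction ϱ g h).map f = obstruction (fun g => (ϱ g).map f) g h := by
  rw [obstruction, obstruction, Matrix.map_mul, Matrix.map_mul, map_nonsing_inv f (hϱ _)]

theorem obstruction_eq_one_of_map_mul (hϱ : ∀ g h, ϱ (g * h) = ϱ g * ϱ h)
    (hdet : ∀ g, IsUnit (ϱ g).det) (g h : G) : obstruction ϱ g h = 1 := by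
  rw [obstruction, ← hϱ, mul_nonsing_inv _ (hdet _)]

theorem transpose_obstruction_mul_mul {J : Matrix n n R} (ψ : G →* Rˣ)
    (hν : ∀ g, (ϱ g)ᵀ * J * ϱ g = (ψ g : R) • J) (hdet : ∀ g, IsUnit (ϱ g).det) (g h : G) :
    (obstruction ϱ g h)ᵀ * J * obstruction ϱ g h = J := by
  refine transpose_mul_nonsing_inv_mul_mul (hdet _) ?_
  rw [transpose_mul_mul_eq_smul_mul (hν g) (hν h), hν, map_mul, Units.val_mul]

end Obstruction

theorem det_Jmat (R : Type*) [CommRing R] : (Jmat R).det = 1 := by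
  simp [Jmat, det_succ_row_zero, Fin.sum_univ_succ, Fin.succAbove]

theorem map_Jmat {R S : Type*} [CommRing R] [CommRing S] (f : R →+* S) :
    (Jmat R).map f = Jmat S := by
  ext i j
  fin_cases i <;> fin_cases j <;> simp [Jmat]

section FirstOrderModPowSucc

variable {p : ℕ} {m : ℕ}

local notation "ε" => ((p : ZMod (p ^ (m + 1))) ^ m)
local notation "φ" => ZMod.castHom (dvd_pow_self p m.succ_ne_zero) (ZMod p)
local notation "ι" => fun x : ZMod p => ((ZMod.val x : ℕ) : ZMod (p ^ (m + 1)))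

theorem natCast_pow_mul_self_eq_zero (hm : m ≠ 0) : ε * ε = 0 := by
  have hp : (p : ZMod (p ^ (m + 1))) ^ (m + 1) = 0 := by exact_mod_cast ZMod.natCast_self _
  rw [← pow_add, show m + m = (m + 1) + (m - 1) by omega, pow_add (p : ZMod (p ^ (m + 1))),
    hp, zero_mul]

variable [NeZero p]

theorem natCast_pow_mul_eq_zero_iff (r : ZMod (p ^ (m + 1))) :
    ε * r = 0 ↔ φ r = 0 := by
  have hr : ε * r = ((p ^ m * r.val : ℕ) : ZMod (p ^ (m + 1))) := by
    rw [Nat.cast_mul, Nat.cast_pow, ZMod.natCast_zmod_val]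
  rw [hr, ZMod.castHom_apply, ← ZMod.natCast_val, ZMod.natCast_eq_zero_iff,
    ZMod.natCast_eq_zero_iff]
  exact (Iff.of_eq (congrArg (· ∣ p ^ m * r.val) (pow_succ p m))).trans
    (Nat.mul_dvd_mul_iff_left (pow_pos (Nat.pos_of_neZero p) m))

theorem castHom_natCast_val (x : ZMod p) :
    φ (x.val : ZMod (p ^ (m + 1))) = x := by
  rw [map_natCast, ZMod.natCast_zmod_val]

theorem exists_eq_natCast_pow_mul_val {r : ZMod (p ^ (m + 1))}
    (hr : ZMod.castHom (pow_dvd_pow p m.le_succ) (ZMod (p ^ m)) r = 0) :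
    ∃ x : ZMod p, r = ε * (x.val : ZMod (p ^ (m + 1))) := by
  rw [ZMod.castHom_apply, ← ZMod.natCast_val, ZMod.natCast_eq_zero_iff] at hr
  obtain ⟨t, ht⟩ := hr
  refine ⟨t, ?_⟩
  rw [← ZMod.natCast_zmod_val r, ht, Nat.cast_mul, Nat.cast_pow, ← sub_eq_zero, ← mul_sub,
    natCast_pow_mul_eq_zero_iff, map_sub, castHom_natCast_val, map_natCast, sub_self]

variable {n o : Type*}

theorem map_castHom_eq_zero_of_smul_eq_zero {M : Matrix n o (ZMod (p ^ (m + 1)))}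
    (h : ε • M = 0) : M.map φ = 0 := by
  ext i j
  exact (natCast_pow_mul_eq_zero_iff _).1 (by simpa using congrFun (congrFun h i) j)

theorem map_castHom_map_val (C : Matrix n o (ZMod p)) : (C.map ι).map φ = C := by
  ext i j
  exact castHom_natCast_val (C i j)

theorem smul_map_val_injective :
    Function.Injective fun C : Matrix n o (ZMod p) => ε • C.map ι := by
  intro C C' h
  have h' : ε • (C.map ι - C'.map ι) = 0 := by rw [smul_sub]; exact sub_eq_zero.2 h
  have := map_castHom_eq_zero_of_smul_eq_zero h'
  rwa [Matrix.map_sub _ (map_sub _), map_castHom_map_val, map_castHom_map_val, sub_eq_zero]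
    at this

theorem exists_eq_smul_map_val {M : Matrix n o (ZMod (p ^ (m + 1)))}
    (hM : M.map (ZMod.castHom (pow_dvd_pow p m.le_succ) (ZMod (p ^ m))) = 0) :
    ∃ C : Matrix n o (ZMod p), M = ε • C.map ι := by
  choose C hC using fun i j => exists_eq_natCast_pow_mul_val (congrFun (congrFun hM i) j)
  exact ⟨Matrix.of C, by ext i j; exact hC i j⟩

variable [Fintype n] [DecidableEq n]

theorem transpose_mul_add_mul_eq_zero_of_eq_one_add_smul (hm : m ≠ 0)
    {J E : Matrix n n (ZMod (p ^ (m + 1)))} {C : Matrix n n (ZMod p)}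
    (hE : Eᵀ * J * E = J) (hEC : E = 1 + ε • C.map ι) :
    Cᵀ * J.map φ + J.map φ * C = 0 := by
  have h := map_castHom_eq_zero_of_smul_eq_zero
    (smul_transpose_mul_add_mul_eq_zero (natCast_pow_mul_self_eq_zero hm) (hEC ▸ hE))
  rwa [Matrix.map_add _ (map_add _), Matrix.map_mul, Matrix.map_mul, transpose_map,
    map_castHom_map_val] at h

theorem cocycle_of_mul_eq_mul (hm : m ≠ 0) {P E₁ E₂ E₃ E₄ : Matrix n n (ZMod (p ^ (m + 1)))}
    {C₁ C₂ C₃ C₄ : Matrix n n (ZMod p)} (hP : IsUnit P.det)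
    (h₁ : E₁ = 1 + ε • C₁.map ι) (h₂ : E₂ = 1 + ε • C₂.map ι)
    (h₃ : E₃ = 1 + ε • C₃.map ι) (h₄ : E₄ = 1 + ε • C₄.map ι)
    (h : E₁ * E₂ = P * E₃ * P⁻¹ * E₄) :
    P.map φ * C₃ * (P.map φ)⁻¹ - C₂ + C₄ - C₁ = 0 := by
  have hε := natCast_pow_mul_self_eq_zero (p := p) hm
  rw [h₁, h₂, h₃, h₄, one_add_smul_mul_one_add_smul hε, mul_one_add_smul_mul_nonsing_inv hP,
    one_add_smul_mul_one_add_smul hε, add_right_inj, ← sub_eq_zero, ← smul_sub] at h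
  have h' := map_castHom_eq_zero_of_smul_eq_zero h
  simp only [Matrix.map_sub _ (map_sub _), Matrix.map_add _ (map_add _), Matrix.map_mul,
    map_nonsing_inv _ hP, map_castHom_map_val] at h'
  rw [← neg_eq_zero, ← h']
  abel

end FirstOrderModPowSucc

/-- Given a homomorphism `ρ_m : G → GSp₄(ℤ/p^mℤ)`, a homomorphism
`ψ : G → (ℤ/p^{m+1}ℤ)ˣ` and a set-theoretic lift `ϱ` of `ρ_m` with `ν ∘ ϱ = ψ`,
the element `ϱ(g)ϱ(h)ϱ(gh)⁻¹` equals `1 + p^m·c̃(g,h)` for a unique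
`c(g,h) ∈ sp₄(𝔽_p)`, and `c` satisfies the 2-cocycle identity
`ρ̄(g)·c(h,k)·ρ̄(g)⁻¹ − c(gh,k) + c(g,hk) − c(g,h) = 0`. -/
theorem obstruction_two_cocycle (p : ℕ) [Fact p.Prime] (m : ℕ) (hm : 1 ≤ m)
    (G : Type*) [Group G]
    (ρm : G → Matrix (Fin 4) (Fin 4) (ZMod (p ^ m)))
    (hρmul : ∀ g h : G, ρm (g * h) = ρm g * ρm h)
    (ψ : G →* (ZMod (p ^ (m + 1)))ˣ)
    (ϱ : G → Matrix (Fin 4) (Fin 4) (ZMod (p ^ (m + 1))))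
    (hred : ∀ g : G,
      (ϱ g).map (ZMod.castHom (pow_dvd_pow p (by omega : m ≤ m + 1)) (ZMod (p ^ m))) = ρm g)
    (hν : ∀ g : G,
      (ϱ g)ᵀ * Jmat (ZMod (p ^ (m + 1))) * ϱ g
        = ((ψ g : (ZMod (p ^ (m + 1)))ˣ) : ZMod (p ^ (m + 1))) • Jmat (ZMod (p ^ (m + 1)))) :
    (∀ g h : G, ∃! C : Matrix (Fin 4) (Fin 4) (ZMod p),
      Cᵀ * Jmat (ZMod p) + Jmat (ZMod p) * C = 0 ∧
      ϱ g * ϱ h * (ϱ (g * h))⁻¹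
        = 1 + ((p : ZMod (p ^ (m + 1))) ^ m) •
            C.map (fun x => (x.val : ZMod (p ^ (m + 1))))) ∧
    (∀ c : G → G → Matrix (Fin 4) (Fin 4) (ZMod p),
      (∀ g h : G,
        (c g h)ᵀ * Jmat (ZMod p) + Jmat (ZMod p) * c g h = 0 ∧
        ϱ g * ϱ h * (ϱ (g * h))⁻¹
          = 1 + ((p : ZMod (p ^ (m + 1))) ^ m) •
              (c g h).map (fun x => (x.val : ZMod (p ^ (m + 1))))) →
      ∀ g h k : G,
        (ρm g).map (ZMod.castHom (dvd_pow_self p (by omega : m ≠ 0)) (ZMod p)) * c h k *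
            ((ρm g).map (ZMod.castHom (dvd_pow_self p (by omega : m ≠ 0)) (ZMod p)))⁻¹
          - c (g * h) k + c g (h * k) - c g h = 0) := by
  have hm0 : m ≠ 0 := Nat.one_le_iff_ne_zero.1 hm
  have hdet : ∀ g, IsUnit (ϱ g).det := fun g =>
    isUnit_det_of_transpose_mul_mul_eq_smul (by rw [det_Jmat]; exact isUnit_one) (ψ g).isUnit
      (hν g)
  have hρdet : ∀ g, IsUnit (ρm g).det := fun g => by
    rw [← hred, ← RingHom.mapMatrix_apply, ← RingHom.map_det]
    exact (hdet g).map _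
  refine ⟨fun g h => ?_, fun c hc g h k => ?_⟩
  · have hρred : (obstruction ϱ g h - 1).map
        (ZMod.castHom (pow_dvd_pow p m.le_succ) (ZMod (p ^ m))) = 0 := by
      rw [Matrix.map_sub _ (map_sub _), map_obstruction _ hdet,
        Matrix.map_one _ (map_zero _) (map_one _)]
      simp only [hred]
      rw [obstruction_eq_one_of_map_mul hρmul hρdet, sub_self]
    obtain ⟨C, hC⟩ := exists_eq_smul_map_val hρred
    have hE := eq_add_of_sub_eq' hC
    refine ⟨C, ⟨?_, hE⟩,
      fun C' hC' => smul_map_val_injective (add_left_cancel (hC'.2.symm.trans hE))⟩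
    rw [← map_Jmat (ZMod.castHom (dvd_pow_self p m.succ_ne_zero) (ZMod p))]
    exact transpose_mul_add_mul_eq_zero_of_eq_one_add_smul hm0
      (transpose_obstruction_mul_mul ψ hν hdet g h) hE
  · have hρbar : (ϱ g).map (ZMod.castHom (dvd_pow_self p m.succ_ne_zero) (ZMod p))
        = (ρm g).map (ZMod.castHom (dvd_pow_self p hm0) (ZMod p)) := by
      rw [← hred, Matrix.map_map, ← RingHom.coe_comp, ZMod.castHom_comp]
    rw [← hρbar]
    exact cocycle_of_mul_eq_mul hm0 (hdet g) (hc g h).2 (hc (g * h) k).2 (hc h k).2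
      (hc g (h * k)).2 (obstruction_mul_obstruction hdet g h k)
end

section
/- Let p be a prime and l, m ≥ 1 integers. Let a, b, S, T ∈ M₄(ℤ_p) and set x = 1 + p^l·a + p^{l+1}·S and y = 1 + p^m·b + p^{m+1}·T. Then x and y are invertible in M₄(ℤ_p), and the commutator satisfies x·y·x⁻¹·y⁻¹ ≡ 1 + p^{l+m}·(ab − ba) (mod p^{l+m+1}·M₄(ℤ_p)). -/
open Matrix IsLocalRing

/-!
Write `x = 1 + p u` and `y = 1 + p v`. Both are units because their determinants reduce to `1`
modulo `p`, and then `x⁻¹ y⁻¹ = 1 + p W` as well. The identity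
`x y x⁻¹ y⁻¹ = 1 + (x y - y x) x⁻¹ y⁻¹` reduces the claim to
`x y - y x ≡ p^{l+m} (a b - b a) (mod p^{l+m+1})`, which is a direct expansion.
-/

theorem Matrix.isUnit_one_add_smul_of_mem_maximalIdeal {R n : Type*} [CommRing R] [IsLocalRing R]
    [Fintype n] [DecidableEq n] {q : R} (hq : q ∈ maximalIdeal R) (z : Matrix n n R) :
    IsUnit (1 + q • z) := by
  have hres : (residue R).mapMatrix (1 + q • z) = 1 := by
    ext i j
    simp [one_apply, apply_ite (residue R), (residue_eq_zero_iff q).mpr hq]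
  rw [isUnit_iff_isUnit_det, ← residue_ne_zero_iff_isUnit, RingHom.map_det, hres, det_one]
  exact one_ne_zero

section Perturbation

variable {R A : Type*} [CommRing R] [Ring A] [Algebra R A] (q : R)

theorem exists_one_add_pow_smul_add_pow_smul_eq {l : ℕ} (hl : 1 ≤ l) (a S : A) :
    ∃ u : A, 1 + q ^ l • a + q ^ (l + 1) • S = 1 + q • u := by
  obtain ⟨k, rfl⟩ := Nat.exists_eq_add_of_le' hl
  exact ⟨q ^ k • a + q ^ (k + 1) • S, by module⟩

theorem exists_ring_inverse_eq_one_add_smul {u : A} (hu : IsUnit (1 + q • u)) :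
    ∃ w : A, Ring.inverse (1 + q • u) = 1 + q • w := by
  refine ⟨-(u * Ring.inverse (1 + q • u)), ?_⟩
  have h := Ring.mul_inverse_cancel _ hu
  rw [add_mul, one_mul, smul_mul_assoc] at h
  rw [smul_neg, ← sub_eq_add_neg, eq_sub_iff_add_eq, h]

theorem exists_one_add_smul_mul_one_add_smul (u v : A) :
    ∃ w : A, (1 + q • u) * (1 + q • v) = 1 + q • w :=
  ⟨u + v + q • (u * v), by
    simp only [add_mul, mul_add, one_mul, mul_one, smul_mul_assoc, mul_smul_comm]
    module⟩

theorem exists_commutator_one_add_pow_smul_add_pow_smul (l m : ℕ) (a b S T : A) :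
    ∃ D : A, (1 + q ^ l • a + q ^ (l + 1) • S) * (1 + q ^ m • b + q ^ (m + 1) • T) -
        (1 + q ^ m • b + q ^ (m + 1) • T) * (1 + q ^ l • a + q ^ (l + 1) • S) =
      q ^ (l + m) • (a * b - b * a) + q ^ (l + m + 1) • D :=
  ⟨a * T - T * a + S * b - b * S + q • (S * T - T * S), by
    simp only [add_mul, mul_add, one_mul, mul_one, smul_mul_assoc, mul_smul_comm,
      smul_smul, smul_sub, smul_add]
    module⟩

theorem pow_smul_add_pow_smul_mul_one_add_smul (n : ℕ) (c D W : A) :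
    (q ^ n • c + q ^ (n + 1) • D) * (1 + q • W) =
      q ^ n • c + q ^ (n + 1) • (D + c * W + q • (D * W)) := by
  simp only [add_mul, mul_add, mul_one, smul_mul_assoc, mul_smul_comm, smul_smul, smul_add]
  module

end Perturbation

theorem mul_mul_ring_inverse_mul_ring_inverse {A : Type*} [Ring A] {x y : A} (hx : IsUnit x)
    (hy : IsUnit y) :
    x * y * Ring.inverse x * Ring.inverse y =
      1 + (x * y - y * x) * (Ring.inverse x * Ring.inverse y) := by
  have h : x * y * Ring.inverse x * Ring.inverse y =
      (x * y - y * x) * (Ring.inverse x * Ring.inverse y) +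
        y * (x * Ring.inverse x) * Ring.inverse y := by
    noncomm_ring
  rw [h, Ring.mul_inverse_cancel x hx, mul_one, Ring.mul_inverse_cancel y hy, add_comm]

/-- For `x = 1 + p^l·a + p^{l+1}·S` and `y = 1 + p^m·b + p^{m+1}·T` in `M₄(ℤ_p)`
(`l, m ≥ 1`), both `x` and `y` are invertible and
`x·y·x⁻¹·y⁻¹ ≡ 1 + p^{l+m}·(ab − ba) (mod p^{l+m+1}·M₄(ℤ_p))`. -/
theorem commutator_congruence (p : ℕ) [Fact p.Prime] (l m : ℕ) (hl : 1 ≤ l) (hm : 1 ≤ m)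
    (a b S T : Matrix (Fin 4) (Fin 4) ℤ_[p]) :
    IsUnit (1 + ((p : ℤ_[p]) ^ l) • a + ((p : ℤ_[p]) ^ (l + 1)) • S) ∧
    IsUnit (1 + ((p : ℤ_[p]) ^ m) • b + ((p : ℤ_[p]) ^ (m + 1)) • T) ∧
    ∃ E : Matrix (Fin 4) (Fin 4) ℤ_[p],
      (1 + ((p : ℤ_[p]) ^ l) • a + ((p : ℤ_[p]) ^ (l + 1)) • S) *
          (1 + ((p : ℤ_[p]) ^ m) • b + ((p : ℤ_[p]) ^ (m + 1)) • T) *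
          Ring.inverse (1 + ((p : ℤ_[p]) ^ l) • a + ((p : ℤ_[p]) ^ (l + 1)) • S) *
          Ring.inverse (1 + ((p : ℤ_[p]) ^ m) • b + ((p : ℤ_[p]) ^ (m + 1)) • T)
        = 1 + ((p : ℤ_[p]) ^ (l + m)) • (a * b - b * a) + ((p : ℤ_[p]) ^ (l + m + 1)) • E := by
  have hp : (p : ℤ_[p]) ∈ maximalIdeal ℤ_[p] := PadicInt.p_nonunit
  obtain ⟨u, hxu⟩ := exists_one_add_pow_smul_add_pow_smul_eq (p : ℤ_[p]) hl a S
  obtain ⟨v, hyv⟩ := exists_one_add_pow_smul_add_pow_smul_eq (p : ℤ_[p]) hm b T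
  obtain ⟨D, hD⟩ := exists_commutator_one_add_pow_smul_add_pow_smul (p : ℤ_[p]) l m a b S T
  have hx := isUnit_one_add_smul_of_mem_maximalIdeal hp u
  have hy := isUnit_one_add_smul_of_mem_maximalIdeal hp v
  obtain ⟨u', hu'⟩ := exists_ring_inverse_eq_one_add_smul (p : ℤ_[p]) hx
  obtain ⟨v', hv'⟩ := exists_ring_inverse_eq_one_add_smul (p : ℤ_[p]) hy
  obtain ⟨W, hW⟩ := exists_one_add_smul_mul_one_add_smul (p : ℤ_[p]) u' v'
  rw [hxu, hyv] at hD ⊢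
  refine ⟨hx, hy, ?_⟩
  rw [mul_mul_ring_inverse_mul_ring_inverse hx hy, hD, hu', hv', hW,
    pow_smul_add_pow_smul_mul_one_add_smul, ← add_assoc]
  exact ⟨_, rfl⟩
end

section
/- Let p be an odd prime and let E* be any finite subset of ℤ/(p−1)ℤ with 0 ∉ E* and h ∉ E*, where h denotes the class of (p−1)/2 in ℤ/(p−1)ℤ. Let e be the cardinality of E* and set Ē = E* ∪ {0, 1, h}. If 4e + 8 < (p−1)/2 (as integers), then there exist α, β ∈ ℤ/(p−1)ℤ with α + β odd (i.e. the image of α + β under the natural ring homomorphism ℤ/(p−1)ℤ → ℤ/2ℤ is 1) such that: (a) for every ε ∈ Ē, 2α ∉ {ε, −ε} and 2β ∉ {ε, −ε}; and (b) for every ε ∈ Ē, β ∉ {α+ε, α−ε, −α+ε, −α−ε}. -/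
def halfClass (p : ℕ) : ZMod (p - 1) := (((p - 1) / 2 : ℕ) : ZMod (p - 1))

/-!
Let `S = Ē ∪ -Ē`; since `0` and `h` are their own negatives, `#S ≤ 2e + 4`. In `ℤ/Nℤ` every
element has at most two halves, so some `α` has `2α ∉ S`. Then `β` is chosen among the `N/2`
classes of parity opposite to `α`: for each `v ∈ S` at most two of them are excluded, because
`2β` is even while `β = ±α + v` forces `v` to be odd. As `2 · #S < N/2`, a good `β` remains.
-/

open Finset
open scoped Pointwise

theorem Finset.exists_mem_forall_not_of_card_filter_le {ι κ : Type*} [DecidableEq ι]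
    (s : Finset ι) (t : Finset κ) (r : ι → κ → Prop) [∀ i j, Decidable (r i j)] (k : ℕ)
    (hk : ∀ j ∈ t, #{i ∈ s | r i j} ≤ k) (hlt : k * #t < #s) :
    ∃ i ∈ s, ∀ j ∈ t, ¬ r i j := by
  by_contra! h
  have hcover : s ⊆ t.biUnion fun j ↦ {i ∈ s | r i j} := fun i hi ↦ by
    obtain ⟨j, hj, hij⟩ := h i hi
    exact mem_biUnion.mpr ⟨j, hj, mem_filter.mpr ⟨hi, hij⟩⟩
  have := (card_le_card hcover).trans (card_biUnion_le_card_mul t _ k hk)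
  rw [mul_comm] at this
  omega

namespace ZMod

variable {N : ℕ} [NeZero N]

theorem card_filter_two_mul_eq_zero_le : #{x : ZMod N | 2 * x = 0} ≤ 2 := by
  have hval : ∀ x : ZMod N, 2 * x = 0 → x.val ∈ ({0, N / 2} : Finset ℕ) := by
    intro x hx
    have hdvd : N ∣ 2 * x.val := by
      rw [← ZMod.natCast_eq_zero_iff, Nat.cast_mul, natCast_zmod_val]; exact_mod_cast hx
    obtain ⟨c, hc⟩ := hdvd
    have hlt := x.val_lt
    have : c < 2 := by nlinarith
    rw [mem_insert, mem_singleton]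
    interval_cases c <;> omega
  calc #{x : ZMod N | 2 * x = 0} ≤ #({0, N / 2} : Finset ℕ) :=
        card_le_card_of_injOn val (fun x hx ↦ hval x (mem_filter.mp hx).2)
          (val_injective N).injOn
    _ ≤ 2 := card_le_two

theorem card_filter_two_mul_eq_le (v : ZMod N) : #{x : ZMod N | 2 * x = v} ≤ 2 := by
  by_cases hv : ∃ x : ZMod N, 2 * x = v
  · have := AddMonoidHom.card_fiber_eq_of_mem_range (AddMonoidHom.mulLeft (2 : ZMod N)) hv
      ⟨0, mul_zero _⟩
    simp only [AddMonoidHom.coe_mulLeft] at this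
    exact this ▸ card_filter_two_mul_eq_zero_le
  · rw [card_eq_zero.mpr (filter_eq_empty_iff.mpr fun x _ hx ↦ hv ⟨x, hx⟩)]
    omega

theorem card_filter_castHom_eq (hN : 2 ∣ N) (c : ZMod 2) :
    #{x : ZMod N | castHom hN (ZMod 2) x = c} = N / 2 := by
  have hfib : ∀ c : ZMod 2, #{x : ZMod N | castHom hN (ZMod 2) x = c} =
      #{x : ZMod N | castHom hN (ZMod 2) x = 0} := fun c ↦
    AddMonoidHom.card_fiber_eq_of_mem_range (castHom hN (ZMod 2)) (castHom_surjective hN c)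
      (castHom_surjective hN 0)
  have hsum := card_eq_sum_card_fiberwise (s := univ) (t := univ)
    (f := castHom hN (ZMod 2)) (fun _ _ ↦ mem_univ _)
  simp only [hfib, sum_const, card_univ, ZMod.card, smul_eq_mul] at hsum
  rw [hfib c]
  omega

theorem card_filter_opposite_parity_le (hN : 2 ∣ N) (α v : ZMod N) :
    #{β ∈ ({β : ZMod N | castHom hN (ZMod 2) β = castHom hN (ZMod 2) α + 1} : Finset _) |
      2 * β = v ∨ β = α + v ∨ β = -α + v} ≤ 2 := by
  set π := castHom hN (ZMod 2)
  rcases (by decide : ∀ c : ZMod 2, c = 0 ∨ c = 1) (π v) with hv | hv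
  · refine (card_le_card fun β hβ ↦ ?_).trans (card_filter_two_mul_eq_le v)
    simp only [mem_filter, mem_univ, true_and] at hβ ⊢
    obtain ⟨hπβ, hβ | hβ | hβ⟩ := hβ
    · exact hβ
    all_goals
      subst hβ
      simp [hv, neg_eq_self_mod_two] at hπβ
  · refine (card_le_card fun β hβ ↦ ?_).trans (card_le_two (a := α + v) (b := -α + v))
    simp only [mem_filter, mem_univ, true_and, mem_insert, mem_singleton] at hβ ⊢
    obtain ⟨-, hβ | hβ⟩ := hβ
    · rw [← hβ, two_mul, map_add, CharTwo.add_self_eq_zero] at hv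
      exact absurd hv zero_ne_one
    · exact hβ

theorem exists_pair_avoiding (hN : 2 ∣ N) (S : Finset (ZMod N)) (hS : 2 * #S < N / 2) :
    ∃ α β : ZMod N, castHom hN (ZMod 2) (α + β) = 1 ∧
      ∀ v ∈ S, 2 * α ≠ v ∧ 2 * β ≠ v ∧ β ≠ α + v ∧ β ≠ -α + v := by
  set π := castHom hN (ZMod 2)
  obtain ⟨α, -, hα⟩ := exists_mem_forall_not_of_card_filter_le univ S (fun α v ↦ 2 * α = v) 2
    (fun v _ ↦ card_filter_two_mul_eq_le v) (by rw [card_univ, ZMod.card]; omega)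
  obtain ⟨β, hβ, hβS⟩ := exists_mem_forall_not_of_card_filter_le {β | π β = π α + 1} S
    (fun β v ↦ 2 * β = v ∨ β = α + v ∨ β = -α + v) 2
    (fun v _ ↦ card_filter_opposite_parity_le hN α v) (by rw [card_filter_castHom_eq]; omega)
  refine ⟨α, β, ?_, fun v hv ↦ ?_⟩
  · rw [map_add, (mem_filter.mp hβ).2, ← add_assoc, CharTwo.add_self_eq_zero, zero_add]
  · simp only [not_or] at hβS
    exact ⟨hα v hv, hβS v hv⟩

end ZMod

theorem neg_halfClass {p : ℕ} (hp : 2 ∣ p - 1) : -halfClass p = halfClass p := by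
  have hsum : (p - 1) / 2 + (p - 1) / 2 = p - 1 := by omega
  rw [neg_eq_iff_add_eq_zero, halfClass, ← Nat.cast_add, hsum, ZMod.natCast_self]

/-- For an odd prime `p` and a finite subset `E* ⊆ ℤ/(p−1)ℤ` with `0, h ∉ E*` and
`4·#E* + 8 < (p−1)/2`, there exist `α, β ∈ ℤ/(p−1)ℤ` with `α + β` odd satisfying
conditions (a) and (b) with respect to `Ē = E* ∪ {0, 1, h}`. -/
theorem exists_good_pair (p : ℕ) (hp : p.Prime) (hodd : p ≠ 2)
    (Estar : Finset (ZMod (p - 1)))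
    (hcard : 4 * (Estar.card : ℤ) + 8 < ((p : ℤ) - 1) / 2) :
    ∃ α β : ZMod (p - 1),
      ZMod.castHom
          (by obtain ⟨k, hk⟩ := hp.odd_of_ne_two hodd; omega : (2 : ℕ) ∣ p - 1)
          (ZMod 2) (α + β) = 1 ∧
      (∀ ε ∈ (↑Estar ∪ {0, 1, halfClass p} : Set (ZMod (p - 1))),
        2 * α ≠ ε ∧ 2 * α ≠ -ε ∧ 2 * β ≠ ε ∧ 2 * β ≠ -ε) ∧
      (∀ ε ∈ (↑Estar ∪ {0, 1, halfClass p} : Set (ZMod (p - 1))),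
        β ≠ α + ε ∧ β ≠ α - ε ∧ β ≠ -α + ε ∧ β ≠ -α - ε) := by
  have hp2 := hp.two_le
  have hdvd : 2 ∣ p - 1 := by obtain ⟨k, hk⟩ := hp.odd_of_ne_two hodd; omega
  have : NeZero (p - 1) := ⟨by omega⟩
  set T := insert 1 Estar
  set S : Finset (ZMod (p - 1)) := {0, halfClass p} ∪ (T ∪ -T)
  have hS : 2 * #S < (p - 1) / 2 := by
    have hT : #T ≤ #Estar + 1 := card_insert_le _ _
    have : #S ≤ 2 + (#T + #(-T)) :=
      (card_union_le _ _).trans (add_le_add card_le_two (card_union_le _ _))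
    rw [card_neg] at this
    omega
  have hmem : ∀ ε ∈ (↑Estar ∪ {0, 1, halfClass p} : Set (ZMod (p - 1))), ε ∈ S ∧ -ε ∈ S := by
    rintro ε (hε | rfl | rfl | rfl)
    · simp [S, T, mem_coe.mp hε]
    · simp [S]
    · simp [S, T]
    · simp [S, neg_halfClass hdvd]
  obtain ⟨α, β, hpar, hgood⟩ := ZMod.exists_pair_avoiding hdvd S hS
  refine ⟨α, β, hpar, fun ε hε ↦ ?_, fun ε hε ↦ ?_⟩
  · obtain ⟨hε, hε'⟩ := hmem ε hε
    exact ⟨(hgood ε hε).1, (hgood _ hε').1, (hgood ε hε).2.1, (hgood _ hε').2.1⟩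
  · obtain ⟨hε, hε'⟩ := hmem ε hε
    rw [sub_eq_add_neg, sub_eq_add_neg]
    exact ⟨(hgood ε hε).2.2.1, (hgood _ hε').2.2.1, (hgood ε hε).2.2.2, (hgood _ hε').2.2.2⟩
end
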